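/- arXiv:1411.2889 — 2 statements merged into one kernel-verified Lean document; each statement's English description precedes it below -/
import Mathlib

section
/- Let Γ be a finitely generated group, p, q ≥ 3, and let ρ0 ∈ Hom(Γ, SO(p,q)) have Zariski-dense image in the block-diagonal subgroup SO(p)×SO(q). Let (ρ_n) be a sequence in Hom(Γ, SO(p,q)) converging pointwise to ρ0, and suppose that for each n the Zariski closure of ρ_n(Γ) is conjugate in SO(p,q) either to SO(p)×SO(q) or to S(O(p)×O(q)). Then there exists an integer N such that for all n ≥ N the Zariski closure of ρ_n(Γ) is conjugate to SO(p)×SO(q). -/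
/-!
For `S ∈ O(p,q)` the block `S₁₁` is invertible and `S ↦ sign det S₁₁` is a character of
`O(p,q)`: writing `(S T)₁₁ = S₁₁ (1 + M N) T₁₁`, the matrices `Mᵀ` and `N` are contractions,
`N` a strict one, so `det (1 + t M N)` does not vanish for `t ∈ [0, 1]` and `det (1 + M N) > 0`.
The character is trivial on `SO(p) × SO(q) ⊇ ρ₀(Γ)`, hence, by continuity, eventually trivial
on a finite generating set of `Γ`, and then on all of `ρₙ(Γ)`. At `g diag(A, B) g⁻¹` in
`g S(O(p) × O(q)) g⁻¹` it takes the value `det A`, so if this set were the Zariski closure of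
`ρₙ(Γ)`, the polynomial `S ↦ det (g⁻¹ S g)₁₁ - 1` would vanish on `ρₙ(Γ)` but not on its
Zariski closure.
-/
noncomputable section

open MvPolynomial Matrix

namespace Paper

variable {ι : Type} [Fintype ι] [DecidableEq ι] {K : Type} [Field K]

/-- The entries of a matrix, as a point of affine space. -/
def mPt (A : Matrix ι ι K) : ι × ι → K := fun p => A p.1 p.2

/-- The Zariski closure of a set of matrices: the common zero locus of all polynomial
functions of the entries vanishing on the set. -/
def zClosure (s : Set (Matrix ι ι K)) : Set (Matrix ι ι K) :=
  {A | ∀ f : MvPolynomial (ι × ι) K,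
    (∀ B ∈ s, MvPolynomial.eval (mPt B) f = 0) → MvPolynomial.eval (mPt A) f = 0}

/-- The Zariski topology on matrices, generated by complements of zero sets of
polynomial functions of the entries. -/
def zTop (ι K : Type) [Fintype ι] [Field K] : TopologicalSpace (Matrix ι ι K) :=
  TopologicalSpace.generateFrom
    {U | ∃ f : MvPolynomial (ι × ι) K, U = {A | MvPolynomial.eval (mPt A) f ≠ 0}}

/-- A set of matrices is Zariski closed if it equals its Zariski closure. -/
def IsZClosed (s : Set (Matrix ι ι K)) : Prop := zClosure s = s

/-- Zariski connectedness (as a subspace of the Zariski topology). -/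
def IsZConnected (s : Set (Matrix ι ι K)) : Prop :=
  letI := zTop ι K
  IsPreconnected s

/-- Krull dimension of a set of matrices in the Zariski topology, as a natural number. -/
def zDim (s : Set (Matrix ι ι K)) : ℕ :=
  letI := zTop ι K
  (WithBot.unbotD 0 (topologicalKrullDim s)).toNat

/-- A set of matrices forming a subgroup of the group of invertible matrices. -/
def IsMatSubgroup (s : Set (Matrix ι ι K)) : Prop :=
  (1 : Matrix ι ι K) ∈ s ∧ (∀ A ∈ s, ∀ B ∈ s, A * B ∈ s) ∧
    ∀ A ∈ s, IsUnit A ∧ A⁻¹ ∈ s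

/-- The set of commutators of elements of `s`. -/
def commSet (s : Set (Matrix ι ι K)) : Set (Matrix ι ι K) :=
  {X | ∃ A ∈ s, ∃ B ∈ s, X = A * B * A⁻¹ * B⁻¹}

/-- The subgroup (set) generated by a set of matrices. -/
def genSubgroup (t : Set (Matrix ι ι K)) : Set (Matrix ι ι K) :=
  ⋂₀ {u | IsMatSubgroup u ∧ t ⊆ u}

/-- Derived series of a set of matrices. -/
def derivedSeriesSet (s : Set (Matrix ι ι K)) : ℕ → Set (Matrix ι ι K)
  | 0 => s
  | n + 1 => genSubgroup (commSet (derivedSeriesSet s n))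

/-- Solvability for a matrix group. -/
def IsSolvableSet (s : Set (Matrix ι ι K)) : Prop :=
  ∃ n, derivedSeriesSet s n ⊆ {1}

/-- `t` is normal in `s`. -/
def IsNormalIn (t s : Set (Matrix ι ι K)) : Prop :=
  ∀ A ∈ s, ∀ B ∈ t, A * B * A⁻¹ ∈ t

/-- A semisimple linear algebraic group: a Zariski-closed, Zariski-connected matrix
subgroup with trivial radical, i.e. every Zariski-closed connected normal solvable
subgroup is trivial. -/
def IsSemisimpleGrp (s : Set (Matrix ι ι K)) : Prop :=
  IsMatSubgroup s ∧ IsZClosed s ∧ IsZConnected s ∧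
    ∀ t ⊆ s, IsMatSubgroup t → IsZClosed t → IsZConnected t →
      IsNormalIn t s → IsSolvableSet t → t ⊆ {1}

/-- The identity component of a matrix group: the union of all Zariski-connected
subsets of `s` containing the identity. -/
def idComponent (s : Set (Matrix ι ι K)) : Set (Matrix ι ι K) :=
  {A | ∃ t ⊆ s, IsZConnected t ∧ (1 : Matrix ι ι K) ∈ t ∧ A ∈ t}

/-- A unipotent matrix. -/
def IsUnipotent (A : Matrix ι ι K) : Prop := (A - 1) ^ Fintype.card ι = 0

/-- A reductive linear algebraic group: a Zariski-closed matrix subgroup whose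
identity component has trivial unipotent radical, i.e. every Zariski-closed connected
normal subgroup of the identity component consisting of unipotent elements is trivial. -/
def IsReductiveGrp (s : Set (Matrix ι ι K)) : Prop :=
  IsMatSubgroup s ∧ IsZClosed s ∧
    ∀ t ⊆ idComponent s, IsMatSubgroup t → IsZClosed t → IsZConnected t →
      IsNormalIn t (idComponent s) → (∀ A ∈ t, IsUnipotent A) → t ⊆ {1}

/-- A matrix is diagonalizable. -/
def IsDiagonalizable (A : Matrix ι ι K) : Prop :=
  ∃ P D : Matrix ι ι K, IsUnit P ∧ D.IsDiag ∧ A = P * D * P⁻¹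

/-- A torus in a real matrix group: a Zariski-closed, Zariski-connected commutative
matrix subgroup all of whose elements are diagonalizable over `ℂ`. -/
def IsTorus (s : Set (Matrix ι ι ℝ)) : Prop :=
  IsMatSubgroup s ∧ IsZClosed s ∧ IsZConnected s ∧
    (∀ A ∈ s, ∀ B ∈ s, A * B = B * A) ∧
    ∀ A ∈ s, IsDiagonalizable (A.map (algebraMap ℝ ℂ))

/-- The rank of a real linear algebraic group: the dimension of a maximal torus. -/
def rankGrp (s : Set (Matrix ι ι ℝ)) : ℕ :=
  sSup {d | ∃ t ⊆ s, IsTorus t ∧ zDim t = d}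

/-- The matrix `J = diag(I_p, −I_q)`. -/
def Jmat (p q : ℕ) : Matrix (Fin p ⊕ Fin q) (Fin p ⊕ Fin q) ℝ :=
  Matrix.fromBlocks 1 0 0 (-1)

/-- The indefinite special orthogonal group `SO(p,q)`, as a set of matrices. -/
def SOpq (p q : ℕ) : Set (Matrix (Fin p ⊕ Fin q) (Fin p ⊕ Fin q) ℝ) :=
  {S | S.det = 1 ∧ Sᵀ * Jmat p q * S = Jmat p q}

/-- The special orthogonal group `SO(n)`, as a set of matrices. -/
def SOn (n : ℕ) : Set (Matrix (Fin n) (Fin n) ℝ) :=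
  {M | M.det = 1 ∧ Mᵀ * M = 1}

/-- `SO(p) × SO(q)`, block-diagonally embedded into `SO(p,q)`. -/
def blockSO (p q : ℕ) : Set (Matrix (Fin p ⊕ Fin q) (Fin p ⊕ Fin q) ℝ) :=
  {S | ∃ M ∈ SOn p, ∃ N ∈ SOn q, S = Matrix.fromBlocks M 0 0 N}

/-- The quadratic form `Q(v) = vᵀ J v` on `ℝ^{p+q}`. -/
def Qform (p q : ℕ) (v : Fin p ⊕ Fin q → ℝ) : ℝ :=
  dotProduct v ((Jmat p q).mulVec v)

/-- The orthogonal complement of a subspace with respect to the bilinear form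
`B(v,w) = vᵀ J w`. -/
def perpJ (p q : ℕ) (W : Submodule ℝ (Fin p ⊕ Fin q → ℝ)) :
    Submodule ℝ (Fin p ⊕ Fin q → ℝ) where
  carrier := {v | ∀ w ∈ W, dotProduct v ((Jmat p q).mulVec w) = 0}
  zero_mem' := by
    intro w hw
    simp [zero_dotProduct]
  add_mem' := by
    intro a b ha hb w hw
    rw [add_dotProduct, ha w hw, hb w hw, add_zero]
  smul_mem' := by
    intro c a ha w hw
    rw [smul_dotProduct, ha w hw, smul_zero]

/-- The complexification of a real subspace of `ℝ^ι`, as a complex subspace of `ℂ^ι`. -/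
def cxSpan {ι : Type} (W : Submodule ℝ (ι → ℝ)) : Submodule ℂ (ι → ℂ) :=
  Submodule.span ℂ ((fun (v : ι → ℝ) (i : ι) => ((v i : ℝ) : ℂ)) '' (W : Set (ι → ℝ)))

/-- The orthogonal group `O(n)`, as a set of matrices. -/
def On (n : ℕ) : Set (Matrix (Fin n) (Fin n) ℝ) := {M | Mᵀ * M = 1}

/-- `S(O(p) × O(q))`, block-diagonally embedded into `SO(p,q)`. -/
def blockSOO (p q : ℕ) : Set (Matrix (Fin p ⊕ Fin q) (Fin p ⊕ Fin q) ℝ) :=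
  {S | ∃ A ∈ On p, ∃ B ∈ On q, A.det * B.det = 1 ∧ S = Matrix.fromBlocks A 0 0 B}

lemma toBlocks₁₁_one {m n R : Type} [DecidableEq m] [DecidableEq n] [Zero R] [One R] :
    (1 : Matrix (m ⊕ n) (m ⊕ n) R).toBlocks₁₁ = 1 := by
  rw [← fromBlocks_one, toBlocks_fromBlocks₁₁]

lemma toBlocks₁₁_mul {m n R : Type} [Fintype m] [Fintype n] [NonUnitalNonAssocSemiring R]
    (S T : Matrix (m ⊕ n) (m ⊕ n) R) :
    (S * T).toBlocks₁₁ = S.toBlocks₁₁ * T.toBlocks₁₁ + S.toBlocks₁₂ * T.toBlocks₂₁ := by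
  conv_lhs => rw [← fromBlocks_toBlocks S, ← fromBlocks_toBlocks T, fromBlocks_multiply]
  rw [toBlocks_fromBlocks₁₁]

lemma continuous_det_toBlocks₁₁ {m n : Type} [Fintype m] [DecidableEq m] :
    Continuous fun S : Matrix (m ⊕ n) (m ⊕ n) ℝ => S.toBlocks₁₁.det :=
  (continuous_id.matrix_submatrix Sum.inl Sum.inl).matrix_det

lemma subset_zClosure {ι K : Type} [Field K] (s : Set (Matrix ι ι K)) : s ⊆ zClosure s :=
  fun A hA _ hf => hf A hA

lemma exists_eval_mPt_eq_det_toBlocks₁₁ {m n K : Type} [Fintype m] [DecidableEq m] [Fintype n]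
    [DecidableEq n] [Field K] (u w : Matrix (m ⊕ n) (m ⊕ n) K) :
    ∃ f : MvPolynomial ((m ⊕ n) × (m ⊕ n)) K,
      ∀ A, eval (mPt A) f = (u * A * w).toBlocks₁₁.det := by
  refine ⟨(u.map C * mvPolynomialX _ _ K * w.map C).toBlocks₁₁.det, fun A => ?_⟩
  have hC : ∀ B : Matrix (m ⊕ n) (m ⊕ n) K, (eval (mPt A)).mapMatrix (B.map C) = B :=
    fun B => by ext; simp
  have hX : (eval (mPt A)).mapMatrix (mvPolynomialX _ _ K) = A := mvPolynomialX_mapMatrix_eval A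
  have hmap :
      (eval (mPt A)).mapMatrix (u.map C * mvPolynomialX _ _ K * w.map C) = u * A * w := by
    rw [map_mul, map_mul, hC, hC, hX]
  rw [RingHom.map_det, ← hmap]
  rfl

section BlockContraction

variable {m n : Type} [Fintype m] [Fintype n]

lemma dotProduct_mulVec_mulVec_self (X : Matrix m n ℝ) (v : n → ℝ) :
    (X *ᵥ v) ⬝ᵥ (X *ᵥ v) = v ⬝ᵥ ((Xᵀ * X) *ᵥ v) := by
  rw [← mulVec_mulVec, dotProduct_mulVec v, vecMul_transpose]

lemma dotProduct_self_nonneg (v : n → ℝ) : 0 ≤ v ⬝ᵥ v := by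
  simpa using dotProduct_self_star_nonneg v

lemma dotProduct_self_pos {v : n → ℝ} (hv : v ≠ 0) : 0 < v ⬝ᵥ v :=
  (dotProduct_self_nonneg v).lt_of_ne fun h => hv (dotProduct_self_eq_zero.1 h.symm)

lemma det_one_add_pos_of_forall_det_ne_zero [DecidableEq m] (X : Matrix m m ℝ)
    (h : ∀ t ∈ Set.Icc (0 : ℝ) 1, (1 + t • X).det ≠ 0) : 0 < (1 + X).det := by
  have hcont : Continuous fun t : ℝ => (1 + t • X).det :=
    (continuous_const.add (continuous_id.smul continuous_const)).matrix_det
  by_contra! hle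
  obtain ⟨t, ht, h0⟩ := intermediate_value_Icc' zero_le_one hcont.continuousOn
    (show (0 : ℝ) ∈ Set.Icc ((1 + (1 : ℝ) • X).det) ((1 + (0 : ℝ) • X).det) by simp [hle])
  exact h t ht h0

lemma dotProduct_sq_le (v w : n → ℝ) : (v ⬝ᵥ w) ^ 2 ≤ (v ⬝ᵥ v) * (w ⬝ᵥ w) := by
  simpa only [dotProduct, pow_two] using Finset.sum_mul_sq_le_sq_mul_sq Finset.univ v w

lemma det_one_add_mul_pos [DecidableEq m] {M : Matrix m n ℝ} {N : Matrix n m ℝ}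
    (hM : ∀ v, (Mᵀ *ᵥ v) ⬝ᵥ (Mᵀ *ᵥ v) ≤ v ⬝ᵥ v)
    (hN : ∀ v, v ≠ 0 → (N *ᵥ v) ⬝ᵥ (N *ᵥ v) < v ⬝ᵥ v) : 0 < (1 + M * N).det := by
  refine det_one_add_pos_of_forall_det_ne_zero _ fun t ⟨ht0, ht1⟩ hdet => ?_
  obtain ⟨v, hv0, hv⟩ := exists_mulVec_eq_zero_iff.2 hdet
  have hfix : v = -t • (M *ᵥ (N *ᵥ v)) := by
    rw [add_mulVec, one_mulVec, smul_mulVec, ← mulVec_mulVec, add_eq_zero_iff_eq_neg] at hv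
    rw [neg_smul, ← hv]
  have hvv : v ⬝ᵥ v = -t * ((Mᵀ *ᵥ v) ⬝ᵥ (N *ᵥ v)) :=
    calc v ⬝ᵥ v = (-t • (M *ᵥ (N *ᵥ v))) ⬝ᵥ v := by rw [← hfix]
      _ = -t * ((Mᵀ *ᵥ v) ⬝ᵥ (N *ᵥ v)) := by
        rw [smul_dotProduct, dotProduct_comm, dotProduct_mulVec, ← mulVec_transpose,
          smul_eq_mul]
  have hlt : (v ⬝ᵥ v) ^ 2 < (v ⬝ᵥ v) ^ 2 :=
    calc (v ⬝ᵥ v) ^ 2 = t ^ 2 * ((Mᵀ *ᵥ v) ⬝ᵥ (N *ᵥ v)) ^ 2 := by rw [hvv]; ring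
      _ ≤ 1 * ((Mᵀ *ᵥ v) ⬝ᵥ (Mᵀ *ᵥ v) * (N *ᵥ v) ⬝ᵥ (N *ᵥ v)) :=
        mul_le_mul (pow_le_one₀ ht0 ht1) (dotProduct_sq_le _ _) (sq_nonneg _) zero_le_one
      _ ≤ v ⬝ᵥ v * (N *ᵥ v) ⬝ᵥ (N *ᵥ v) := by
        rw [one_mul]; exact mul_le_mul_of_nonneg_right (hM v) (dotProduct_self_nonneg _)
      _ < (v ⬝ᵥ v) ^ 2 := by
        rw [sq]; exact mul_lt_mul_of_pos_left (hN v hv0) (dotProduct_self_pos hv0)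
  exact lt_irrefl _ hlt

variable [DecidableEq n]

lemma isUnit_det_of_transpose_mul_self_eq_one_add {A : Matrix n n ℝ} {C : Matrix m n ℝ}
    (h : Aᵀ * A = 1 + Cᵀ * C) : IsUnit A.det := by
  have hpos : (1 + Cᵀ * C).PosDef := by
    simpa using PosDef.one.add_posSemidef (posSemidef_conjTranspose_mul_self C)
  have := hpos.det_pos
  rw [← h, det_mul, det_transpose] at this
  exact isUnit_iff_ne_zero.2 fun h0 => by simp [h0] at this

lemma dotProduct_mul_inv_mulVec_self_add {A : Matrix n n ℝ} {C : Matrix m n ℝ}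
    (h : Aᵀ * A = 1 + Cᵀ * C) (v : n → ℝ) :
    ((C * A⁻¹) *ᵥ v) ⬝ᵥ ((C * A⁻¹) *ᵥ v) + (A⁻¹ *ᵥ v) ⬝ᵥ (A⁻¹ *ᵥ v) = v ⬝ᵥ v := by
  have hA := isUnit_det_of_transpose_mul_self_eq_one_add h
  obtain ⟨u, rfl⟩ : ∃ u, v = A *ᵥ u :=
    ⟨A⁻¹ *ᵥ v, by rw [mulVec_mulVec, mul_nonsing_inv _ hA, one_mulVec]⟩
  simp only [mulVec_mulVec, nonsing_inv_mul_cancel_right _ _ hA, nonsing_inv_mul _ hA, one_mulVec]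
  rw [dotProduct_mulVec_mulVec_self C, dotProduct_mulVec_mulVec_self A, h, add_mulVec,
    one_mulVec, dotProduct_add, add_comm]

end BlockContraction

def indefOrthogonal (p q : ℕ) : Submonoid (Matrix (Fin p ⊕ Fin q) (Fin p ⊕ Fin q) ℝ) where
  carrier := {S | Sᵀ * Jmat p q * S = Jmat p q}
  mul_mem' {S T} (hS : Sᵀ * Jmat p q * S = Jmat p q) (hT : Tᵀ * Jmat p q * T = Jmat p q) :=
    calc (S * T)ᵀ * Jmat p q * (S * T) = Tᵀ * (Sᵀ * Jmat p q * S) * T := by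
          simp only [transpose_mul, Matrix.mul_assoc]
      _ = Jmat p q := by rw [hS, hT]
  one_mem' := by simp

section IndefOrthogonal

variable {p q : ℕ} {S T : Matrix (Fin p ⊕ Fin q) (Fin p ⊕ Fin q) ℝ}

lemma mem_indefOrthogonal : S ∈ indefOrthogonal p q ↔ Sᵀ * Jmat p q * S = Jmat p q := Iff.rfl

lemma Jmat_transpose : (Jmat p q)ᵀ = Jmat p q := by
  simp [Jmat, fromBlocks_transpose]

lemma Jmat_mul_self : Jmat p q * Jmat p q = 1 := by
  simp [Jmat, fromBlocks_multiply, fromBlocks_one]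

lemma Jmat_mem_indefOrthogonal : Jmat p q ∈ indefOrthogonal p q := by
  rw [mem_indefOrthogonal, Jmat_transpose, Jmat_mul_self, Matrix.one_mul]

lemma Jmat_mul_transpose_mul_Jmat_mul (hS : S ∈ indefOrthogonal p q) :
    Jmat p q * Sᵀ * Jmat p q * S = 1 := by
  calc Jmat p q * Sᵀ * Jmat p q * S = Jmat p q * (Sᵀ * Jmat p q * S) := by
        simp only [Matrix.mul_assoc]
    _ = 1 := by rw [mem_indefOrthogonal.1 hS, Jmat_mul_self]

lemma transpose_mem_indefOrthogonal (hS : S ∈ indefOrthogonal p q) :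
    Sᵀ ∈ indefOrthogonal p q := by
  have h : S * (Jmat p q * Sᵀ * Jmat p q) = 1 :=
    mul_eq_one_comm.1 (Jmat_mul_transpose_mul_Jmat_mul hS)
  rw [mem_indefOrthogonal, transpose_transpose]
  calc S * Jmat p q * Sᵀ = S * (Jmat p q * Sᵀ * Jmat p q) * Jmat p q := by
        simp only [Matrix.mul_assoc, Jmat_mul_self, Matrix.mul_one]
    _ = Jmat p q := by rw [h, Matrix.one_mul]

lemma inv_mem_indefOrthogonal (hS : S ∈ indefOrthogonal p q) : S⁻¹ ∈ indefOrthogonal p q := by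
  rw [inv_eq_left_inv (Jmat_mul_transpose_mul_Jmat_mul hS)]
  exact mul_mem (mul_mem Jmat_mem_indefOrthogonal (transpose_mem_indefOrthogonal hS))
    Jmat_mem_indefOrthogonal

lemma toBlocks₁₁_transpose_mul_self (hS : S ∈ indefOrthogonal p q) :
    S.toBlocks₁₁ᵀ * S.toBlocks₁₁ = 1 + S.toBlocks₂₁ᵀ * S.toBlocks₂₁ := by
  have h := congrArg toBlocks₁₁ (mem_indefOrthogonal.1 hS)
  rw [← fromBlocks_toBlocks S, Jmat, fromBlocks_transpose, fromBlocks_multiply,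
    fromBlocks_multiply] at h
  simp only [toBlocks_fromBlocks₁₁, Matrix.mul_one, Matrix.mul_zero, Matrix.mul_neg, add_zero,
    zero_add] at h
  rw [← h, Matrix.neg_mul]; abel

lemma isUnit_det_toBlocks₁₁ (hS : S ∈ indefOrthogonal p q) : IsUnit S.toBlocks₁₁.det :=
  isUnit_det_of_transpose_mul_self_eq_one_add (toBlocks₁₁_transpose_mul_self hS)

lemma sign_det_toBlocks₁₁_mul (hS : S ∈ indefOrthogonal p q) (hT : T ∈ indefOrthogonal p q) :
    SignType.sign (S * T).toBlocks₁₁.det =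
      SignType.sign S.toBlocks₁₁.det * SignType.sign T.toBlocks₁₁.det := by
  have hA := isUnit_det_toBlocks₁₁ hS
  have hA' := isUnit_det_toBlocks₁₁ hT
  set M := S.toBlocks₁₁⁻¹ * S.toBlocks₁₂
  set N := T.toBlocks₂₁ * T.toBlocks₁₁⁻¹
  have hM : ∀ v, (Mᵀ *ᵥ v) ⬝ᵥ (Mᵀ *ᵥ v) ≤ v ⬝ᵥ v := fun v => by
    have h := dotProduct_mul_inv_mulVec_self_add
      (toBlocks₁₁_transpose_mul_self (transpose_mem_indefOrthogonal hS)) v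
    have := dotProduct_self_nonneg (Sᵀ.toBlocks₁₁⁻¹ *ᵥ v)
    rw [show Mᵀ = Sᵀ.toBlocks₂₁ * Sᵀ.toBlocks₁₁⁻¹ by
      rw [transpose_mul, transpose_nonsing_inv]; rfl]
    linarith
  have hN : ∀ v, v ≠ 0 → (N *ᵥ v) ⬝ᵥ (N *ᵥ v) < v ⬝ᵥ v := fun v hv => by
    have h := dotProduct_mul_inv_mulVec_self_add (toBlocks₁₁_transpose_mul_self hT) v
    have hu : T.toBlocks₁₁⁻¹ *ᵥ v ≠ 0 := fun h0 => hv <| by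
      rw [← one_mulVec v, ← mul_nonsing_inv _ hA', ← mulVec_mulVec, h0, mulVec_zero]
    have := dotProduct_self_pos hu
    linarith
  have hfactor : (S * T).toBlocks₁₁ = S.toBlocks₁₁ * (1 + M * N) * T.toBlocks₁₁ := by
    rw [toBlocks₁₁_mul, Matrix.mul_add, Matrix.mul_one, Matrix.add_mul]
    simp only [M, N, Matrix.mul_assoc, mul_nonsing_inv_cancel_left _ _ hA,
      nonsing_inv_mul _ hA', Matrix.mul_one]
  rw [hfactor, det_mul, det_mul, sign_mul, sign_mul, sign_pos (det_one_add_mul_pos hM hN),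
    mul_one]

def signDetToBlocks₁₁ : indefOrthogonal p q →* SignType where
  toFun S := SignType.sign (S : Matrix (Fin p ⊕ Fin q) (Fin p ⊕ Fin q) ℝ).toBlocks₁₁.det
  map_one' := by simp [toBlocks₁₁_one]
  map_mul' S T := sign_det_toBlocks₁₁_mul S.2 T.2

lemma isUnit_det_of_mem_indefOrthogonal (hS : S ∈ indefOrthogonal p q) : IsUnit S.det :=
  isUnit_det_of_left_inverse (Jmat_mul_transpose_mul_Jmat_mul hS)

lemma pos_det_toBlocks₁₁_of_closure_eq_top {Γ : Type} [Group Γ]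
    {ρ : Γ →* Matrix (Fin p ⊕ Fin q) (Fin p ⊕ Fin q) ℝ} (hρ : ∀ γ, ρ γ ∈ indefOrthogonal p q)
    {s : Set Γ} (hs : Subgroup.closure s = ⊤) (hpos : ∀ γ ∈ s, 0 < (ρ γ).toBlocks₁₁.det)
    (γ : Γ) : 0 < (ρ γ).toBlocks₁₁.det := by
  have hker : Subgroup.closure s ≤ (signDetToBlocks₁₁.comp (ρ.codRestrict _ hρ)).ker :=
    (Subgroup.closure_le _).2 fun γ hγ => sign_pos (hpos γ hγ)
  rw [hs] at hker
  exact sign_eq_one_iff.1 (hker (Subgroup.mem_top γ))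

lemma sign_det_toBlocks₁₁_conj (hS : S ∈ indefOrthogonal p q) (hT : T ∈ indefOrthogonal p q) :
    SignType.sign (S * T * S⁻¹).toBlocks₁₁.det = SignType.sign T.toBlocks₁₁.det := by
  have hS' := inv_mem_indefOrthogonal hS
  rw [sign_det_toBlocks₁₁_mul (mul_mem hS hT) hS', sign_det_toBlocks₁₁_mul hS hT, mul_right_comm,
    ← sign_det_toBlocks₁₁_mul hS hS', mul_nonsing_inv _ (isUnit_det_of_mem_indefOrthogonal hS),
    toBlocks₁₁_one, det_one, sign_one, one_mul]

end IndefOrthogonal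

lemma det_eq_one_of_mem_On {n : ℕ} {A : Matrix (Fin n) (Fin n) ℝ} (hA : A ∈ On n)
    (hpos : 0 < A.det) : A.det = 1 := by
  have h := congrArg det (show Aᵀ * A = 1 from hA)
  rw [det_mul, det_transpose, det_one] at h
  nlinarith

lemma exists_mem_On_det_eq_neg_one {n : ℕ} (hn : 0 < n) : ∃ A ∈ On n, A.det = -1 := by
  let d : Fin n → ℝ := Function.update 1 ⟨0, hn⟩ (-1)
  refine ⟨diagonal d, ?_, ?_⟩
  · show (diagonal d)ᵀ * diagonal d = 1
    rw [diagonal_transpose, diagonal_mul_diagonal, ← diagonal_one]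
    congr 1
    ext i
    by_cases h : i = ⟨0, hn⟩ <;> simp [d, h]
  · rw [det_diagonal, Finset.prod_update_of_mem (Finset.mem_univ _)]
    simp

lemma fromBlocks_mem_indefOrthogonal {p q : ℕ} {A : Matrix (Fin p) (Fin p) ℝ}
    {B : Matrix (Fin q) (Fin q) ℝ} (hA : A ∈ On p) (hB : B ∈ On q) :
    fromBlocks A 0 0 B ∈ indefOrthogonal p q := by
  rw [mem_indefOrthogonal, Jmat, fromBlocks_transpose, fromBlocks_multiply, fromBlocks_multiply]
  simp [show Aᵀ * A = 1 from hA, show Bᵀ * B = 1 from hB]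

lemma zClosure_ne_conj_blockSOO {p q : ℕ} (hp : 0 < p) (hq : 0 < q)
    {g : Matrix (Fin p ⊕ Fin q) (Fin p ⊕ Fin q) ℝ} (hg : g ∈ indefOrthogonal p q)
    {s : Set (Matrix (Fin p ⊕ Fin q) (Fin p ⊕ Fin q) ℝ)} (hs : ∀ S ∈ s, 0 < S.toBlocks₁₁.det) :
    zClosure s ≠ (fun B => g * B * g⁻¹) '' blockSOO p q := by
  intro hcl
  have hconj : ∀ B, g⁻¹ * (g * B * g⁻¹) * g = B := fun B => by
    have hdet := isUnit_det_of_mem_indefOrthogonal hg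
    rw [Matrix.mul_assoc, nonsing_inv_mul_cancel_right _ _ hdet,
      nonsing_inv_mul_cancel_left _ _ hdet]
  obtain ⟨f, hf⟩ := exists_eval_mPt_eq_det_toBlocks₁₁ g⁻¹ g
  have hvanish : ∀ S ∈ s, eval (mPt S) (f - 1) = 0 := by
    intro S hS
    obtain ⟨_, ⟨A, hA, B, hB, -, rfl⟩, rfl⟩ := hcl ▸ subset_zClosure s hS
    have hsign := sign_det_toBlocks₁₁_conj hg (fromBlocks_mem_indefOrthogonal hA hB)
    rw [sign_pos (hs _ hS), toBlocks_fromBlocks₁₁, eq_comm, sign_eq_one_iff] at hsign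
    rw [map_sub, map_one, hf, hconj, toBlocks_fromBlocks₁₁, det_eq_one_of_mem_On hA hsign,
      sub_self]
  obtain ⟨A, hA, hdetA⟩ := exists_mem_On_det_eq_neg_one hp
  obtain ⟨B, hB, hdetB⟩ := exists_mem_On_det_eq_neg_one hq
  have hmem : g * fromBlocks A 0 0 B * g⁻¹ ∈ zClosure s :=
    hcl ▸ ⟨_, ⟨A, hA, B, hB, by rw [hdetA, hdetB]; norm_num, rfl⟩, rfl⟩
  have := hmem (f - 1) hvanish
  rw [map_sub, map_one, hf, hconj, toBlocks_fromBlocks₁₁, hdetA] at this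
  norm_num at this

theorem stmt_14_general (Γ : Type) [Group Γ] (hΓ : Group.FG Γ) (p q : ℕ)
    (hp : 3 ≤ p) (hq : 3 ≤ q)
    (ρ0 : Γ →* Matrix (Fin p ⊕ Fin q) (Fin p ⊕ Fin q) ℝ)
    (hdense : zClosure (Set.range ⇑ρ0) = blockSO p q)
    (ρseq : ℕ → (Γ →* Matrix (Fin p ⊕ Fin q) (Fin p ⊕ Fin q) ℝ))
    (hmem : ∀ n γ, ρseq n γ ∈ SOpq p q)
    (hconv : ∀ γ, Filter.Tendsto (fun n => ρseq n γ) Filter.atTop (nhds (ρ0 γ)))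
    (hconj : ∀ n,
      (∃ g ∈ SOpq p q,
        zClosure (Set.range ⇑(ρseq n)) = (fun B => g * B * g⁻¹) '' blockSO p q) ∨
      (∃ g ∈ SOpq p q,
        zClosure (Set.range ⇑(ρseq n)) = (fun B => g * B * g⁻¹) '' blockSOO p q)) :
    ∃ N : ℕ, ∀ n, N ≤ n →
      ∃ g ∈ SOpq p q,
        zClosure (Set.range ⇑(ρseq n)) = (fun B => g * B * g⁻¹) '' blockSO p q := by
  obtain ⟨gens, hgens⟩ := hΓ
  have hρ0_pos : ∀ γ, 0 < (ρ0 γ).toBlocks₁₁.det := fun γ => by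
    obtain ⟨M, hM, N, -, hMN⟩ : ρ0 γ ∈ blockSO p q := hdense ▸ subset_zClosure _ ⟨γ, rfl⟩
    rw [hMN, toBlocks_fromBlocks₁₁, hM.1]
    exact one_pos
  have hgens_pos : ∀ᶠ n in Filter.atTop, ∀ γ ∈ gens, 0 < (ρseq n γ).toBlocks₁₁.det :=
    Filter.eventually_all_finset gens |>.2 fun γ _ =>
      (continuous_det_toBlocks₁₁.tendsto _ |>.comp (hconv γ)).eventually
        (eventually_gt_nhds (hρ0_pos γ))
  obtain ⟨N, hN⟩ := Filter.eventually_atTop.1 hgens_pos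
  refine ⟨N, fun n hn => (hconj n).resolve_right ?_⟩
  rintro ⟨g, hg, hcl⟩
  refine zClosure_ne_conj_blockSOO (by omega) (by omega) hg.2 ?_ hcl
  rintro _ ⟨γ, rfl⟩
  exact pos_det_toBlocks₁₁_of_closure_eq_top (fun γ => (hmem n γ).2) hgens (hN n hn) γ

theorem stmt_14 (Γ : Type) [Group Γ] (hΓ : Group.FG Γ) (p q : ℕ)
    (hp : 3 ≤ p) (hq : 3 ≤ q)
    (ρ0 : Γ →* Matrix (Fin p ⊕ Fin q) (Fin p ⊕ Fin q) ℝ)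
    (h0 : ∀ γ, ρ0 γ ∈ SOpq p q)
    (hdense : zClosure (Set.range ⇑ρ0) = blockSO p q)
    (ρseq : ℕ → (Γ →* Matrix (Fin p ⊕ Fin q) (Fin p ⊕ Fin q) ℝ))
    (hmem : ∀ n γ, ρseq n γ ∈ SOpq p q)
    (hconv : ∀ γ, Filter.Tendsto (fun n => ρseq n γ) Filter.atTop (nhds (ρ0 γ)))
    (hconj : ∀ n,
      (∃ g ∈ SOpq p q,
        zClosure (Set.range ⇑(ρseq n)) = (fun B => g * B * g⁻¹) '' blockSO p q) ∨
      (∃ g ∈ SOpq p q,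
        zClosure (Set.range ⇑(ρseq n)) = (fun B => g * B * g⁻¹) '' blockSOO p q)) :
    ∃ N : ℕ, ∀ n, N ≤ n →
      ∃ g ∈ SOpq p q,
        zClosure (Set.range ⇑(ρseq n)) = (fun B => g * B * g⁻¹) '' blockSO p q :=
  stmt_14_general Γ hΓ p q hp hq ρ0 hdense ρseq hmem hconv hconj

end Paper
end
end

section
/- Let T be a linear automorphism of finite order of an n-dimensional complex vector space V (hence T is diagonalizable). Let S be the set of eigenvalues of T and for λ ∈ ℂ let t_λ be the dimension of the λ-eigenspace of T (t_λ = 0 if λ ∉ S). Then the dimension of the 1-eigenspace of the induced automorphism of the exterior square Λ²V equals C(t_1, 2) + C(t_{−1}, 2) + (1/2)·Σ_{λ ∈ S ∖ {1,−1}} t_λ · t_{λ̄}, where C(t,2) = t(t−1)/2 and λ̄ is the complex conjugate (equivalently, inverse) of λ. -/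
/-!
A linear map of finite order `m` is killed by the squarefree polynomial `X ^ m - 1`, hence it is
semisimple and, over `ℂ`, diagonalizable: `f bᵢ = μᵢ • bᵢ` for a basis `b`. The wedges `bᵢ ∧ bⱼ`
with `i < j` form a basis of `Λ²V` on which `Λ²f` acts by `μᵢ μⱼ`, so the dimension to compute is
the number of two-element sets `{i, j}` with `μᵢ μⱼ = 1`. Twice this number counts the ordered pairs
`(i, j)`, `i ≠ j`, and sorting those by `λ = μᵢ` gives `t_λ t_{λ⁻¹}` pairs when `λ ≠ ±1` and
`t_λ (t_λ - 1) = 2 C(t_λ, 2)` pairs when `λ = ±1`. Finally `λ⁻¹ = λ̄` because every eigenvalue is a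
root of unity.
-/

open scoped Classical

open Module Finset

namespace Module.End

variable {K V : Type*} [Field K] [AddCommGroup V] [Module K V]

theorem eigenspace_eq_span_of_basis {ι : Type*} (b : Basis ι K V) {g : End K V} {μ : ι → K}
    (hg : ∀ i, g (b i) = μ i • b i) (a : K) :
    g.eigenspace a = Submodule.span K (b '' {i | μ i = a}) := by
  have hrepr : ∀ x i, b.repr (g x) i = μ i * b.repr x i := by
    intro x i
    change (b.coord i ∘ₗ g) x = (μ i • b.coord i) x
    congr 1
    exact b.ext fun j => by
      by_cases h : j = i
      · subst h; simp [hg]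
      · simp [hg, Ne.symm h]
  ext x
  rw [mem_eigenspace_iff, b.mem_span_image, ← b.repr.injective.eq_iff, Finsupp.ext_iff]
  simp only [hrepr, map_smul, Finsupp.smul_apply, smul_eq_mul, Set.subset_def,
    Finset.mem_coe, Finsupp.mem_support_iff, Set.mem_ofPred_eq]
  refine forall_congr' fun i => ⟨fun h hx => mul_right_cancel₀ hx h, fun h => ?_⟩
  by_cases hx : b.repr x i = 0
  · simp [hx]
  · rw [h hx]

theorem finrank_eigenspace_of_basis {ι : Type*} [Fintype ι] (b : Basis ι K V) {g : End K V}
    {μ : ι → K} (hg : ∀ i, g (b i) = μ i • b i) (a : K) :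
    finrank K (g.eigenspace a) = #{i | μ i = a} := by
  rw [eigenspace_eq_span_of_basis b hg, Set.image_eq_range]
  exact (finrank_span_eq_card (b.linearIndependent.comp _ Subtype.val_injective)).trans
    (Fintype.card_subtype _)

theorem exists_basis_eigenvectors [FiniteDimensional K V] {f : End K V}
    (h : ⨆ a, f.eigenspace a = ⊤) :
    ∃ (n : ℕ) (b : Basis (Fin n) K V) (μ : Fin n → K), ∀ i, f (b i) = μ i • b i := by
  have hint : DirectSum.IsInternal f.eigenspace :=
    (DirectSum.isInternal_submodule_iff_iSupIndep_and_iSup_eq_top _).2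
      ⟨f.eigenspaces_iSupIndep, h⟩
  let B := hint.collectedBasis fun a => Free.chooseBasis K (f.eigenspace a)
  have := Module.Finite.finite_basis B
  let e := Finite.equivFin (Σ a, Free.ChooseBasisIndex K (f.eigenspace a))
  refine ⟨_, B.reindex e, fun i => (e.symm i).1, fun i => ?_⟩
  rw [B.reindex_apply]
  exact mem_eigenspace_iff.mp (hint.collectedBasis_mem _ _)

theorem isSemisimple_of_pow_eq_one {f : End K V} {m : ℕ} (hm : (m : K) ≠ 0)
    (hf : f ^ m = 1) : f.IsSemisimple := by
  refine isSemisimple_of_squarefree_aeval_eq_zero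
    (Polynomial.X_pow_sub_one_separable_iff.mpr hm).squarefree ?_
  simp [hf]

theorem HasEigenvalue.pow_eq_one {f : End K V} {m : ℕ} (hf : f ^ m = 1) {a : K}
    (h : f.HasEigenvalue a) : a ^ m = 1 := by
  obtain ⟨v, hv⟩ := h.exists_hasEigenvector
  have := hv.pow_apply m
  rw [hf, one_apply] at this
  exact smul_left_injective K hv.2 (by simpa using this.symm)

end Module.End

theorem Set.powersetCard.card_filter_univ {ι : Type*} [Fintype ι] (n : ℕ) (P : Finset ι → Prop) :
    #{s : Set.powersetCard ι n | P s.val} = #{s ∈ Finset.powersetCard n Finset.univ | P s} := by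
  refine card_bij (fun s _ => s.val) ?_ (fun _ _ _ _ => Subtype.ext) ?_
  · intro s hs
    simp_all
  · intro s hs
    simp only [Finset.mem_filter, Finset.mem_powersetCard] at hs
    exact ⟨⟨s, hs.1.2⟩, by simpa using hs.2, rfl⟩

namespace exteriorPower

variable {R M N : Type*} [CommRing R] [AddCommGroup M] [Module R M] [AddCommGroup N] [Module R N]

theorem coe_map (n : ℕ) (f : M →ₗ[R] N) (x : ⋀[R]^n M) :
    (map n f x : ExteriorAlgebra R N) = ExteriorAlgebra.map f x := by
  suffices (⋀[R]^n N).subtype ∘ₗ map n f =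
      (ExteriorAlgebra.map f).toLinearMap ∘ₗ (⋀[R]^n M).subtype from
    LinearMap.congr_fun this x
  ext m
  simp

theorem map_eq_restrict (n : ℕ) (f : M →ₗ[R] M) :
    map n f = (ExteriorAlgebra.map f).toLinearMap.restrict
      (p := ⋀[R]^n M) (q := ⋀[R]^n M) fun x hx => coe_map n f ⟨x, hx⟩ ▸ (map n f _).2 :=
  LinearMap.ext fun x => Subtype.ext (coe_map n f x)

theorem eigenspace_inf_eq_map (n : ℕ) (f : M →ₗ[R] M) (a : R) :
    End.eigenspace (ExteriorAlgebra.map f).toLinearMap a ⊓ ⋀[R]^n M =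
      (End.eigenspace (map n f) a).map (⋀[R]^n M).subtype := by
  rw [inf_comm, map_eq_restrict]
  exact Submodule.inf_genEigenspace _ _ _

theorem map_basis_of_eigenvectors {ι : Type*} [LinearOrder ι] (n : ℕ) (b : Basis ι R M)
    {f : M →ₗ[R] M} {μ : ι → R} (hf : ∀ i, f (b i) = μ i • b i) (s : Set.powersetCard ι n) :
    map n f (b.exteriorPower n s) = (∏ i ∈ s.val, μ i) • b.exteriorPower n s := by
  rw [basis_apply, map_apply_ιMulti_family, ιMulti_family, ιMulti_family]
  set e := Set.powersetCard.ofFinEmbEquiv.symm s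
  have : (f ∘ b) ∘ e = fun k => μ (e k) • (b ∘ e) k := funext fun k => hf (e k)
  rw [this, AlternatingMap.map_smul_univ]
  congr 1
  conv_rhs => rw [← s.val.map_orderEmbOfFin_univ s.prop, prod_map]
  rfl

theorem finrank_eigenspace_inf_of_basis {K V ι : Type*} [Field K] [AddCommGroup V] [Module K V]
    [Fintype ι] [LinearOrder ι] (n : ℕ) (b : Basis ι K V) {f : V →ₗ[K] V} {μ : ι → K}
    (hf : ∀ i, f (b i) = μ i • b i) (a : K) :
    finrank K ↥(End.eigenspace (ExteriorAlgebra.map f).toLinearMap a ⊓ ⋀[K]^n V) =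
      #{s ∈ Finset.powersetCard n univ | ∏ i ∈ s, μ i = a} := by
  rw [eigenspace_inf_eq_map, Submodule.finrank_map_subtype_eq,
    End.finrank_eigenspace_of_basis (b.exteriorPower n) (map_basis_of_eigenvectors n b hf)]
  exact Set.powersetCard.card_filter_univ n fun s => ∏ i ∈ s, μ i = a

end exteriorPower

namespace Finset

variable {α : Type*}

theorem two_mul_card_filter_powersetCard_two (t : Finset α) (P : Finset α → Prop) :
    2 * #{s ∈ powersetCard 2 t | P s} = #{p ∈ t.offDiag | P {p.1, p.2}} := by
  have hmaps : ∀ p ∈ {p ∈ t.offDiag | P {p.1, p.2}},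
      ({p.1, p.2} : Finset α) ∈ {s ∈ powersetCard 2 t | P s} := by
    intro p hp
    simp only [mem_filter, mem_offDiag, mem_powersetCard] at hp ⊢
    exact ⟨⟨insert_subset hp.1.1 (singleton_subset_iff.mpr hp.1.2.1), card_pair hp.1.2.2⟩, hp.2⟩
  rw [card_eq_sum_card_fiberwise hmaps, mul_comm, ← smul_eq_mul, ← sum_const]
  refine sum_congr rfl fun s hs => ?_
  simp only [mem_filter, mem_powersetCard] at hs
  obtain ⟨⟨hst, hs2⟩, hP⟩ := hs
  obtain ⟨a, b, hab, rfl⟩ := card_eq_two.mp hs2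
  have : {p ∈ {p ∈ t.offDiag | P {p.1, p.2}} | ({p.1, p.2} : Finset α) = {a, b}} =
      {(a, b), (b, a)} := by
    ext ⟨i, j⟩
    simp only [mem_filter, mem_offDiag, mem_insert, mem_singleton, Prod.mk.injEq]
    constructor
    · rintro ⟨-, h⟩
      exact Set.pair_eq_pair_iff.mp (by simpa using congrArg ((↑) : Finset α → Set α) h)
    · rintro (⟨rfl, rfl⟩ | ⟨rfl, rfl⟩)
      · exact ⟨⟨⟨hst (by simp), hst (by simp), hab⟩, hP⟩, rfl⟩
      · exact ⟨⟨⟨hst (by simp), hst (by simp), hab.symm⟩, by rwa [pair_comm]⟩, pair_comm _ _⟩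
  rw [this, card_pair (by simp [hab])]

theorem card_offDiag_eq_two_mul_choose_two (s : Finset α) :
    #s.offDiag = 2 * (#s).choose 2 := by
  rw [← Sym2.card_image_offDiag, Sym2.two_mul_card_image_offDiag]

variable {ι β : Type*} [Fintype ι] (μ : ι → β)

theorem filter_offDiag_fst_eq_snd_eq_of_ne {a b : β} (hab : a ≠ b) :
    {p ∈ (univ : Finset ι).offDiag | μ p.1 = a ∧ μ p.2 = b} =
      ({i | μ i = a} : Finset ι) ×ˢ ({i | μ i = b} : Finset ι) := by
  ext ⟨i, j⟩
  simp only [mem_filter, mem_offDiag, mem_univ, true_and, mem_product]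
  constructor
  · exact fun h => h.2
  · rintro ⟨rfl, rfl⟩
    exact ⟨fun h => hab (h ▸ rfl), rfl, rfl⟩

theorem filter_offDiag_fst_eq_snd_eq_self (a : β) :
    {p ∈ (univ : Finset ι).offDiag | μ p.1 = a ∧ μ p.2 = a} =
      ({i | μ i = a} : Finset ι).offDiag := by
  ext ⟨i, j⟩
  simp only [mem_filter, mem_offDiag, mem_univ, true_and]
  tauto

theorem filter_offDiag_mul_eq_one_fst_eq {K : Type*} [Field K] {μ : ι → K} (hμ : ∀ i, μ i ≠ 0)
    (a : K) :
    {p ∈ {p ∈ (univ : Finset ι).offDiag | μ p.1 * μ p.2 = 1} | μ p.1 = a} =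
      {p ∈ (univ : Finset ι).offDiag | μ p.1 = a ∧ μ p.2 = a⁻¹} := by
  rw [filter_filter]
  refine filter_congr fun p _ => ?_
  rw [and_comm, and_congr_right_iff]
  rintro rfl
  rw [mul_eq_one_iff_inv_eq₀ (hμ p.1), eq_comm]

end Finset

theorem two_mul_card_filter_powersetCard_two_prod_eq_one {ι K : Type*} [Fintype ι] [Field K]
    (hK : ringChar K ≠ 2) {μ : ι → K} (hμ : ∀ i, μ i ≠ 0) {S : Finset K} (hS : ∀ i, μ i ∈ S) :
    2 * #{s ∈ powersetCard 2 univ | ∏ i ∈ s, μ i = 1} =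
      2 * (#{i | μ i = 1}).choose 2 + 2 * (#{i | μ i = -1}).choose 2 +
        ∑ a ∈ S \ {1, -1}, #{i | μ i = a} * #{i | μ i = a⁻¹} := by
  rw [two_mul_card_filter_powersetCard_two,
    filter_congr fun p hp => by rw [prod_pair (mem_offDiag.mp hp).2.2]]
  have hmaps : ∀ p ∈ {p ∈ (univ : Finset ι).offDiag | μ p.1 * μ p.2 = 1},
      μ p.1 ∈ S ∪ {1, -1} :=
    fun p _ => mem_union_left _ (hS p.1)
  have hself : ∀ a : K, a⁻¹ = a → #{p ∈ (univ : Finset ι).offDiag | μ p.1 = a ∧ μ p.2 = a⁻¹} =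
      2 * (#{i | μ i = a}).choose 2 := fun a ha => by
    rw [ha, filter_offDiag_fst_eq_snd_eq_self, card_offDiag_eq_two_mul_choose_two]
  rw [card_eq_sum_card_fiberwise hmaps,
    ← sum_sdiff (subset_union_right (s₁ := S) (s₂ := {1, -1})), union_sdiff_right,
    sum_pair (Ring.neg_one_ne_one_of_char_ne_two hK).symm]
  simp only [filter_offDiag_mul_eq_one_fst_eq hμ]
  rw [hself 1 inv_one, hself (-1) inv_neg_one, add_comm]
  congr 1
  refine sum_congr rfl fun a ha => ?_
  rw [mem_sdiff, mem_insert, mem_singleton, not_or] at ha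
  by_cases ha0 : a = 0
  -- `0⁻¹ = 0`, but no `μ i` vanishes, so both sides are zero
  · subst ha0
    simp [hμ]
  · refine (congrArg card (filter_offDiag_fst_eq_snd_eq_of_ne μ ?_)).trans (card_product _ _)
    intro h
    have hsq : a * a = 1 := by nth_rw 2 [h]; exact mul_inv_cancel₀ ha0
    exact (mul_self_eq_one_iff.mp hsq).elim ha.2.1 ha.2.2

namespace Paper

theorem stmt_16 (V : Type) [AddCommGroup V] [Module ℂ V] [FiniteDimensional ℂ V]
    (f : V →ₗ[ℂ] V) (hf : ∃ m : ℕ, 0 < m ∧ f ^ m = 1) :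
    -- t λ is the dimension of the λ-eigenspace of f
    let t : ℂ → ℕ := fun lam => Module.finrank ℂ (Module.End.eigenspace f lam)
    -- S is the set of eigenvalues of f
    let S : Finset ℂ := (LinearMap.charpoly f).roots.toFinset
    -- the 1-eigenspace of the induced automorphism Λ²f of Λ²V
    (Module.finrank ℂ
        ((Module.End.eigenspace (ExteriorAlgebra.map f).toLinearMap 1) ⊓
          (⋀[ℂ]^2 V) : Submodule ℂ (ExteriorAlgebra ℂ V)) : ℚ) =
      (t 1).choose 2 + (t (-1)).choose 2 +
        (1 / 2) * ∑ lam ∈ S \ {1, -1}, (t lam : ℚ) * (t (starRingEnd ℂ lam) : ℚ) := by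
  intro t S
  obtain ⟨m, hm, hfm⟩ := hf
  obtain ⟨n, b, μ, hb⟩ := End.exists_basis_eigenvectors
    (End.isSemisimple_of_pow_eq_one (Nat.cast_ne_zero.mpr hm.ne') hfm).iSup_eigenspace_eq_top
  have hS : ∀ {a}, a ∈ S ↔ End.HasEigenvalue f a := by
    intro a
    simp [S, Polynomial.mem_roots (LinearMap.charpoly_monic f).ne_zero,
      End.hasEigenvalue_iff_isRoot_charpoly]
  have hμS : ∀ i, μ i ∈ S := fun i =>
    hS.2 (End.hasEigenvalue_of_hasEigenvector ⟨End.mem_eigenspace_iff.2 (hb i), b.ne_zero i⟩)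
  have hroot : ∀ a ∈ S, a ^ m = 1 := fun a ha => (hS.1 ha).pow_eq_one hfm
  have hμ0 : ∀ i, μ i ≠ 0 := fun i =>
    ne_zero_pow hm.ne' (by rw [hroot _ (hμS i)]; exact one_ne_zero)
  have ht : ∀ a, t a = #{i | μ i = a} := End.finrank_eigenspace_of_basis b hb
  have hconj : ∀ a ∈ S, starRingEnd ℂ a = a⁻¹ := fun a ha =>
    (Complex.inv_eq_conj (Complex.norm_eq_one_of_pow_eq_one (hroot a ha) hm.ne')).symm
  have hcount :=
    two_mul_card_filter_powersetCard_two_prod_eq_one (by simp [ringChar.eq_zero]) hμ0 hμS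
  rw [← exteriorPower.finrank_eigenspace_inf_of_basis 2 b hb] at hcount
  simp only [← ht] at hcount
  have hsum : ∑ a ∈ S \ {1, -1}, (t a : ℚ) * t (starRingEnd ℂ a) =
      ∑ a ∈ S \ {1, -1}, (t a : ℚ) * t a⁻¹ :=
    sum_congr rfl fun a ha => by rw [hconj a (mem_sdiff.mp ha).1]
  have := congrArg (Nat.cast : ℕ → ℚ) hcount
  push_cast at this
  linarith

end Paper
end
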